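/- arXiv:2506.05878 — 4 statements merged into one kernel-verified Lean document; each statement's English description precedes it below -/
import Mathlib

section
/- Let n ≥ 1, x₀ ∈ ℝⁿ, y₀ ∈ ℝ, and let C₂ = {(x, y) ∈ ℝⁿ × ℝ : 1ᵀx ≥ 0, y = 1ᵀx}. Set λ = (y₀ − 1ᵀx₀)/(n + 1), x̂ = x₀ + λ·1 and ŷ = y₀ − λ. Then: (i) if 1ᵀx̂ ≥ 0, the point (x̂, ŷ) is the unique point of C₂ minimizing the squared Euclidean distance ‖x − x₀‖² + (y − y₀)² over C₂; (ii) if 1ᵀx̂ < 0, this unique minimizer is (x₀ − ((1ᵀx₀)/n)·1, 0). -/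
lemma key_aux {n : ℕ} (x₀ p q : Fin n → ℝ) (y₀ py qy : ℝ)
    (hcross : 0 ≤ (∑ i, (p i - x₀ i) * (q i - p i)) + (py - y₀) * (qy - py))
    (hne : (q, qy) ≠ (p, py)) :
    (∑ i, (p i - x₀ i) ^ 2) + (py - y₀) ^ 2
      < (∑ i, (q i - x₀ i) ^ 2) + (qy - y₀) ^ 2 := by
  have hsum : (∑ i, (q i - x₀ i) ^ 2)
      = (∑ i, (p i - x₀ i) ^ 2) + 2 * (∑ i, (p i - x₀ i) * (q i - p i))
        + ∑ i, (q i - p i) ^ 2 := by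
    rw [Finset.mul_sum, ← Finset.sum_add_distrib, ← Finset.sum_add_distrib]
    exact Finset.sum_congr rfl fun i _ => by ring
  have hy : (qy - y₀) ^ 2
      = (py - y₀) ^ 2 + 2 * ((py - y₀) * (qy - py)) + (qy - py) ^ 2 := by ring
  have hpos : 0 < (∑ i, (q i - p i) ^ 2) + (qy - py) ^ 2 := by
    have hnn : 0 ≤ ∑ i, (q i - p i) ^ 2 :=
      Finset.sum_nonneg fun i _ => sq_nonneg _
    by_cases hq : q = p
    · have hy' : qy ≠ py := by
        intro h; exact hne (by rw [hq, h])
      have h0 : qy - py ≠ 0 := sub_ne_zero.mpr hy'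
      have : 0 < (qy - py) ^ 2 := by positivity
      linarith
    · obtain ⟨i, hi⟩ := Function.ne_iff.mp hq
      have h0 : q i - p i ≠ 0 := sub_ne_zero.mpr hi
      have h1 : 0 < (q i - p i) ^ 2 := by positivity
      have h2 : (q i - p i) ^ 2 ≤ ∑ j, (q j - p j) ^ 2 :=
        Finset.single_le_sum (f := fun j => (q j - p j) ^ 2)
          (fun j _ => sq_nonneg _) (Finset.mem_univ i)
      nlinarith [sq_nonneg (qy - py)]
  linarith

/-- Projection onto the "sloped" region `C₂ = {(x, y) : 1ᵀx ≥ 0, y = 1ᵀx}`: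
with `λ = (y₀ − 1ᵀx₀)/(n+1)`, `x̂ = x₀ + λ·1`, `ŷ = y₀ − λ`, (i) if `1ᵀx̂ ≥ 0` then
`(x̂, ŷ)` is the unique minimizer of the squared distance to `(x₀, y₀)` over `C₂`;
(ii) if `1ᵀx̂ < 0` this unique minimizer is `(x₀ − ((1ᵀx₀)/n)·1, 0)`. -/
theorem stmt_4 (n : ℕ) (hn : 1 ≤ n) (x₀ : Fin n → ℝ) (y₀ : ℝ)
    (lam : ℝ) (hlam : lam = (y₀ - ∑ i, x₀ i) / (n + 1))
    (xhat : Fin n → ℝ) (hxhat : xhat = fun i => x₀ i + lam)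
    (yhat : ℝ) (hyhat : yhat = y₀ - lam) :
    (0 ≤ ∑ i, xhat i →
      (xhat, yhat) ∈ {p : (Fin n → ℝ) × ℝ | 0 ≤ (∑ i, p.1 i) ∧ p.2 = ∑ i, p.1 i} ∧
      ∀ q ∈ {p : (Fin n → ℝ) × ℝ | 0 ≤ (∑ i, p.1 i) ∧ p.2 = ∑ i, p.1 i},
        q ≠ (xhat, yhat) →
        (∑ i, (xhat i - x₀ i) ^ 2) + (yhat - y₀) ^ 2
          < (∑ i, (q.1 i - x₀ i) ^ 2) + (q.2 - y₀) ^ 2) ∧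
    ((∑ i, xhat i) < 0 →
      ((fun i => x₀ i - (∑ j, x₀ j) / n), (0 : ℝ)) ∈
          {p : (Fin n → ℝ) × ℝ | 0 ≤ (∑ i, p.1 i) ∧ p.2 = ∑ i, p.1 i} ∧
      ∀ q ∈ {p : (Fin n → ℝ) × ℝ | 0 ≤ (∑ i, p.1 i) ∧ p.2 = ∑ i, p.1 i},
        q ≠ ((fun i => x₀ i - (∑ j, x₀ j) / n), (0 : ℝ)) →
        (∑ i, ((x₀ i - (∑ j, x₀ j) / n) - x₀ i) ^ 2) + ((0 : ℝ) - y₀) ^ 2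
          < (∑ i, (q.1 i - x₀ i) ^ 2) + (q.2 - y₀) ^ 2) := by
  set T : ℝ := ∑ i, x₀ i with hT
  have hn0 : (0 : ℝ) < n := by exact_mod_cast hn
  have hlam' : lam * (n + 1) = y₀ - T := by
    rw [hlam]; field_simp
  have hsumxhat : (∑ i, xhat i) = T + n * lam := by
    rw [hxhat]
    simp [Finset.sum_add_distrib, mul_comm]
    exact hT.symm
  constructor
  · intro hpos
    have hyh : yhat = ∑ i, xhat i := by rw [hsumxhat, hyhat]; linarith
    refine ⟨⟨hpos, hyh⟩, ?_⟩
    rintro ⟨q, qy⟩ ⟨hq1, hq2⟩ hne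
    apply key_aux
    · have hq2' : qy = ∑ i, q i := hq2
      have hcr : (∑ i, (xhat i - x₀ i) * (q i - xhat i))
          = lam * ((∑ i, q i) - ∑ i, xhat i) := by
        rw [mul_sub, Finset.mul_sum, Finset.mul_sum, ← Finset.sum_sub_distrib]
        exact Finset.sum_congr rfl fun i _ => by rw [hxhat]; ring
      have hsx : (∑ i, xhat i) - y₀ = -lam := by rw [← hyh, hyhat]; ring
      rw [hcr, hq2', hyh]
      have : lam * ((∑ i, q i) - ∑ i, xhat i)
          + ((∑ i, xhat i) - y₀) * ((∑ i, q i) - ∑ i, xhat i) = 0 := by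
        rw [hsx]; ring
      linarith
    · exact hne
  · intro hneg
    have hTny : T + n * y₀ < 0 := by
      rw [hsumxhat] at hneg
      nlinarith
    have hsump : (∑ i, (x₀ i - T / n)) = 0 := by
      rw [Finset.sum_sub_distrib]
      simp
      field_simp
      exact sub_eq_zero.mpr hT.symm
    refine ⟨⟨le_of_eq hsump.symm, hsump.symm⟩, ?_⟩
    rintro ⟨q, qy⟩ ⟨hq1, hq2⟩ hne
    apply key_aux
    · have hq2' : qy = ∑ i, q i := hq2
      have hS : (0:ℝ) ≤ ∑ i, q i := hq1
      have hcr : (∑ i, ((x₀ i - T / n) - x₀ i) * (q i - (x₀ i - T / n)))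
          = -(T / n) * ((∑ i, q i) - ∑ i, (x₀ i - T / n)) := by
        rw [mul_sub, Finset.mul_sum, Finset.mul_sum, ← Finset.sum_sub_distrib]
        exact Finset.sum_congr rfl fun i _ => by ring
      have hTn : -(T / (n:ℝ)) - y₀ ≥ 0 := by
        have h1 : (0:ℝ) < -(T + n * y₀) := by linarith
        have h2 : (0:ℝ) ≤ -(T + n * y₀) / n := le_of_lt (div_pos h1 hn0)
        have h3 : -(T + n * y₀) / n = -(T / n) - y₀ := by field_simp; ring
        linarith [h3 ▸ h2]
      rw [hcr, hsump, hq2']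
      nlinarith [mul_nonneg hTn hS]
    · exact hne
end

section
/- Let n ≥ 1, x₀, y₀ ∈ ℝⁿ with x₀ ≠ y₀ and x₀ ≠ −y₀, and z₀ ∈ ℝ. Set p = ⟨x₀, y₀⟩ and q = ‖x₀‖² + ‖y₀‖², and define f(λ) = ((1 + λ²)p + λq)/(1 − λ²)² − z₀ + λ for λ ∈ (−1, 1). Then f has a unique root λ* in (−1, 1), and the point (x(λ*), y(λ*), z₀ − λ*), where x(λ) = (x₀ + λy₀)/(1 − λ²) and y(λ) = (y₀ + λx₀)/(1 − λ²), is the unique point of the set {(x, y, z) ∈ ℝⁿ × ℝⁿ × ℝ : z = ⟨x, y⟩} minimizing the squared Euclidean distance ‖x − x₀‖² + ‖y − y₀‖² + (z − z₀)² over that set. -/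
section StmtAux

private lemma aux_sum10 (n : ℕ) (x₀ y₀ : Fin n → ℝ) (lam : ℝ) (h : (1 - lam ^ 2) ≠ 0) :
    ∑ i, ((x₀ i + lam * y₀ i) / (1 - lam ^ 2)) * ((y₀ i + lam * x₀ i) / (1 - lam ^ 2)) =
      ((1 + lam ^ 2) * (∑ i, x₀ i * y₀ i)
        + lam * ((∑ i, x₀ i ^ 2) + ∑ i, y₀ i ^ 2)) / (1 - lam ^ 2) ^ 2 := by
  calc ∑ i, ((x₀ i + lam * y₀ i) / (1 - lam ^ 2)) * ((y₀ i + lam * x₀ i) / (1 - lam ^ 2))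
      = ∑ i, ((1 + lam ^ 2) * (x₀ i * y₀ i) + lam * (x₀ i ^ 2) + lam * (y₀ i ^ 2)) / (1 - lam ^ 2) ^ 2 :=
        Finset.sum_congr rfl (fun i _ => by field_simp; ring)
    _ = ((1 + lam ^ 2) * (∑ i, x₀ i * y₀ i)
        + lam * ((∑ i, x₀ i ^ 2) + ∑ i, y₀ i ^ 2)) / (1 - lam ^ 2) ^ 2 := by
        rw [← Finset.sum_div]
        congr 1
        simp only [Finset.sum_add_distrib, ← Finset.mul_sum]
        ring

private lemma aux_min10 (n : ℕ) (x₀ y₀ : Fin n → ℝ) (z₀ lam : ℝ) (h1 : -1 < lam) (h2 : lam < 1)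
    (hstar : z₀ - lam = ∑ i, ((x₀ i + lam * y₀ i) / (1 - lam ^ 2)) * ((y₀ i + lam * x₀ i) / (1 - lam ^ 2)))
    (x y : Fin n → ℝ) (z : ℝ) (hz : z = ∑ i, x i * y i)
    (hne : (x, y, z) ≠ ((fun i => (x₀ i + lam * y₀ i) / (1 - lam ^ 2)),
        (fun i => (y₀ i + lam * x₀ i) / (1 - lam ^ 2)), z₀ - lam)) :
    (∑ i, ((x₀ i + lam * y₀ i) / (1 - lam ^ 2) - x₀ i) ^ 2) +
      (∑ i, ((y₀ i + lam * x₀ i) / (1 - lam ^ 2) - y₀ i) ^ 2) + ((z₀ - lam) - z₀) ^ 2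
    < (∑ i, (x i - x₀ i) ^ 2) + (∑ i, (y i - y₀ i) ^ 2) + (z - z₀) ^ 2 := by
  have hd : (1 : ℝ) - lam ^ 2 ≠ 0 := by nlinarith
  set X : Fin n → ℝ := fun i => (x₀ i + lam * y₀ i) / (1 - lam ^ 2) with hX
  set Y : Fin n → ℝ := fun i => (y₀ i + lam * x₀ i) / (1 - lam ^ 2) with hY
  have comb : ∀ i, (x i - x₀ i) ^ 2 + (y i - y₀ i) ^ 2 - ((X i - x₀ i) ^ 2 + (Y i - y₀ i) ^ 2)
      = ((x i - X i) ^ 2 + (y i - Y i) ^ 2 - 2 * lam * ((x i - X i) * (y i - Y i)))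
        + (2 * lam * (x i * y i) - 2 * lam * (X i * Y i)) := by
    intro i
    simp only [hX, hY]
    field_simp
    ring
  set S : ℝ := ∑ i, ((x i - X i) ^ 2 + (y i - Y i) ^ 2 - 2 * lam * ((x i - X i) * (y i - Y i))) with hS
  have hsum : (∑ i, (x i - x₀ i) ^ 2) + (∑ i, (y i - y₀ i) ^ 2)
      - ((∑ i, (X i - x₀ i) ^ 2) + (∑ i, (Y i - y₀ i) ^ 2))
      = S + (2 * lam * (∑ i, x i * y i) - 2 * lam * (∑ i, X i * Y i)) := by
    have e := Finset.sum_congr rfl (fun i (_ : i ∈ Finset.univ) => comb i)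
    simp only [Finset.sum_add_distrib, Finset.sum_sub_distrib, ← Finset.mul_sum] at e
    rw [hS]
    simp only [Finset.sum_add_distrib, Finset.sum_sub_distrib, ← Finset.mul_sum]
    linarith [e]
  have main : (∑ i, (x i - x₀ i) ^ 2) + (∑ i, (y i - y₀ i) ^ 2) + (z - z₀) ^ 2
      - ((∑ i, (X i - x₀ i) ^ 2) + (∑ i, (Y i - y₀ i) ^ 2) + ((z₀ - lam) - z₀) ^ 2)
      = S + (z - (z₀ - lam)) ^ 2 := by
    rw [← hz, ← hstar] at hsum
    nlinarith [hsum]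
  have term_nn : ∀ i, (0:ℝ) ≤ (x i - X i) ^ 2 + (y i - Y i) ^ 2 - 2 * lam * ((x i - X i) * (y i - Y i)) := by
    intro i
    nlinarith [sq_nonneg (x i - X i - (y i - Y i)), sq_nonneg (x i - X i + (y i - Y i))]
  have hSnn : 0 ≤ S := Finset.sum_nonneg (fun i _ => term_nn i)
  have hpos : 0 < S + (z - (z₀ - lam)) ^ 2 := by
    by_cases hzc : z = z₀ - lam
    · have hxy : x ≠ X ∨ y ≠ Y := by
        by_contra h
        push_neg at h
        exact hne (by rw [h.1, h.2, hzc])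
      obtain ⟨i, hi⟩ : ∃ i, x i ≠ X i ∨ y i ≠ Y i := by
        rcases hxy with h | h
        · obtain ⟨i, hi⟩ := Function.ne_iff.mp h; exact ⟨i, Or.inl hi⟩
        · obtain ⟨i, hi⟩ := Function.ne_iff.mp h; exact ⟨i, Or.inr hi⟩
      have hll : (0:ℝ) < 1 - lam ^ 2 := by nlinarith
      have hterm : 0 < (x i - X i) ^ 2 + (y i - Y i) ^ 2 - 2 * lam * ((x i - X i) * (y i - Y i)) := by
        rcases hi with hi | hi
        · have hu : 0 < (x i - X i) ^ 2 :=
            lt_of_le_of_ne (sq_nonneg _) (Ne.symm (pow_ne_zero 2 (sub_ne_zero.mpr hi)))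
          nlinarith [sq_nonneg (y i - Y i - lam * (x i - X i)), mul_pos hll hu]
        · have hu : 0 < (y i - Y i) ^ 2 :=
            lt_of_le_of_ne (sq_nonneg _) (Ne.symm (pow_ne_zero 2 (sub_ne_zero.mpr hi)))
          nlinarith [sq_nonneg (x i - X i - lam * (y i - Y i)), mul_pos hll hu]
      have : 0 < S := Finset.sum_pos' (fun j _ => term_nn j) ⟨i, Finset.mem_univ i, hterm⟩
      nlinarith [sq_nonneg (z - (z₀ - lam))]
    · have : 0 < (z - (z₀ - lam)) ^ 2 :=
        lt_of_le_of_ne (sq_nonneg _) (Ne.symm (pow_ne_zero 2 (sub_ne_zero.mpr hzc)))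
      linarith
  linarith [main, hpos]

private lemma aux_root10 (A B z₀ : ℝ) (hA : 0 < A) (hB : 0 < B) :
    ∃ lam ∈ Set.Ioo (-1:ℝ) 1,
      (A / (1 - lam) ^ 2 - B / (1 + lam) ^ 2 + lam - z₀ = 0) ∧
      ∀ l ∈ Set.Ioo (-1:ℝ) 1, A / (1 - l) ^ 2 - B / (1 + l) ^ 2 + l - z₀ = 0 → l = lam := by
  set F : ℝ → ℝ := fun l => A / (1 - l) ^ 2 - B / (1 + l) ^ 2 + l - z₀ with hF
  have hmono : ∀ a ∈ Set.Ioo (-1:ℝ) 1, ∀ b ∈ Set.Ioo (-1:ℝ) 1, a < b → F a < F b := by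
    rintro a ⟨ha1, ha2⟩ b ⟨hb1, hb2⟩ hab
    have e1 : A / (1 - a) ^ 2 < A / (1 - b) ^ 2 := by
      apply div_lt_div_of_pos_left hA (pow_pos (by linarith) 2) (by nlinarith)
    have e2 : B / (1 + b) ^ 2 < B / (1 + a) ^ 2 := by
      apply div_lt_div_of_pos_left hB (pow_pos (by linarith) 2) (by nlinarith)
    simp only [hF]
    linarith
  set C : ℝ := B + |z₀| + 2 with hC
  have hCpos : 0 < C := by have := abs_nonneg z₀; linarith
  set t : ℝ := min (1/2) (Real.sqrt (A / C)) with ht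
  have ht0 : 0 < t := lt_min (by norm_num) (Real.sqrt_pos.mpr (by positivity))
  have ht2 : t ≤ 1/2 := min_le_left _ _
  have htsq : t ^ 2 ≤ A / C := by
    have h1 : t ≤ Real.sqrt (A / C) := min_le_right _ _
    have := Real.sq_sqrt (le_of_lt (show (0:ℝ) < A / C by positivity))
    nlinarith [ht0]
  have hAt : C ≤ A / t ^ 2 := by
    rw [le_div_iff₀ (by positivity)]
    calc C * t ^ 2 ≤ C * (A / C) := by
          apply mul_le_mul_of_nonneg_left htsq (le_of_lt hCpos)
      _ = A := by field_simp
  have hb_mem : (1 - t) ∈ Set.Ioo (-1:ℝ) 1 := ⟨by linarith, by linarith⟩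
  have hFb : 0 < F (1 - t) := by
    have h12 : (1:ℝ) - (1 - t) = t := by ring
    have h13 : (1:ℝ) + (1 - t) = 2 - t := by ring
    have hBle : B / (2 - t) ^ 2 ≤ B := by
      rw [div_le_iff₀ (by nlinarith)]
      nlinarith
    have habs : -|z₀| ≤ -z₀ := neg_le_neg (le_abs_self z₀)
    simp only [hF, h12, h13]
    have : C ≤ A / t ^ 2 := hAt
    simp only [hC] at this
    linarith
  set C' : ℝ := A + |z₀| + 2 with hC'
  have hC'pos : 0 < C' := by have := abs_nonneg z₀; linarith
  set s : ℝ := min (1/2) (Real.sqrt (B / C')) with hs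
  have hs0 : 0 < s := lt_min (by norm_num) (Real.sqrt_pos.mpr (by positivity))
  have hs2 : s ≤ 1/2 := min_le_left _ _
  have hssq : s ^ 2 ≤ B / C' := by
    have h1 : s ≤ Real.sqrt (B / C') := min_le_right _ _
    have := Real.sq_sqrt (le_of_lt (show (0:ℝ) < B / C' by positivity))
    nlinarith [hs0]
  have hBs : C' ≤ B / s ^ 2 := by
    rw [le_div_iff₀ (by positivity)]
    calc C' * s ^ 2 ≤ C' * (B / C') := by
          apply mul_le_mul_of_nonneg_left hssq (le_of_lt hC'pos)
      _ = B := by field_simp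
  have ha_mem : (-1 + s) ∈ Set.Ioo (-1:ℝ) 1 := ⟨by linarith, by linarith⟩
  have hFa : F (-1 + s) < 0 := by
    have h12 : (1:ℝ) - (-1 + s) = 2 - s := by ring
    have h13 : (1:ℝ) + (-1 + s) = s := by ring
    have hAle : A / (2 - s) ^ 2 ≤ A := by
      rw [div_le_iff₀ (by nlinarith)]
      nlinarith
    have habs : -z₀ ≤ |z₀| := neg_le_abs z₀
    simp only [hF, h12, h13]
    have : C' ≤ B / s ^ 2 := hBs
    simp only [hC'] at this
    linarith
  have hab : (-1 + s) < (1 - t) := by linarith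
  have hsub : Set.Icc (-1 + s) (1 - t) ⊆ Set.Ioo (-1:ℝ) 1 := fun w ⟨hw1, hw2⟩ =>
    ⟨by linarith, by linarith⟩
  have hcont : ContinuousOn F (Set.Icc (-1 + s) (1 - t)) := by
    apply ContinuousOn.sub
    apply ContinuousOn.add
    apply ContinuousOn.sub
    · exact continuousOn_const.div (by fun_prop) (fun w hw => by
        obtain ⟨h1, h2⟩ := hsub hw
        exact ne_of_gt (pow_pos (by linarith) 2))
    · exact continuousOn_const.div (by fun_prop) (fun w hw => by
        obtain ⟨h1, h2⟩ := hsub hw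
        exact ne_of_gt (pow_pos (by linarith) 2))
    · exact continuousOn_id
    · exact continuousOn_const
  have hivt := intermediate_value_Ioo (le_of_lt hab) hcont
  have h0 : (0:ℝ) ∈ Set.Ioo (F (-1 + s)) (F (1 - t)) := ⟨hFa, hFb⟩
  obtain ⟨lam, hlam_mem, hFlam⟩ := hivt h0
  have hlam : lam ∈ Set.Ioo (-1:ℝ) 1 := by
    obtain ⟨h1, h2⟩ := hlam_mem
    constructor <;> linarith
  refine ⟨lam, hlam, hFlam, ?_⟩
  intro l hl hFl
  have hFl' : F l = 0 := hFl
  rcases lt_trichotomy l lam with h | h | h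
  · have := hmono l hl lam hlam h
    rw [hFl', hFlam] at this
    exact absurd this (lt_irrefl 0)
  · exact h
  · have := hmono lam hlam l hl h
    rw [hFl', hFlam] at this
    exact absurd this (lt_irrefl 0)

private lemma aux_eq10 (p q z₀ l : ℝ) (h1 : (1:ℝ) - l ≠ 0) (h2 : (1:ℝ) + l ≠ 0) :
    ((1 + l ^ 2) * p + l * q) / (1 - l ^ 2) ^ 2 - z₀ + l
      = (q + 2 * p) / 4 / (1 - l) ^ 2 - (q - 2 * p) / 4 / (1 + l) ^ 2 + l - z₀ := by
  have h3 : (1:ℝ) - l ^ 2 ≠ 0 := by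
    intro h
    rcases mul_eq_zero.mp (show ((1:ℝ) - l) * (1 + l) = 0 by nlinarith) with h' | h'
    exacts [h1 h', h2 h']
  field_simp
  ring

end StmtAux

/-- Projection onto the graph of the dot product: if `x₀ ≠ ±y₀`, the function
`f(λ) = ((1 + λ²)p + λq)/(1 − λ²)² − z₀ + λ` (with `p = ⟨x₀, y₀⟩`, `q = ‖x₀‖² + ‖y₀‖²`)
has a unique root `λ*` in `(−1, 1)`, and `(x(λ*), y(λ*), z₀ − λ*)`, with
`x(λ) = (x₀ + λy₀)/(1 − λ²)` and `y(λ) = (y₀ + λx₀)/(1 − λ²)`, is the unique point of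
`{(x, y, z) : z = ⟨x, y⟩}` minimizing the squared distance to `(x₀, y₀, z₀)`. -/
theorem stmt_10 (n : ℕ) (hn : 1 ≤ n) (x₀ y₀ : Fin n → ℝ)
    (hne : x₀ ≠ y₀) (hne' : x₀ ≠ -y₀) (z₀ : ℝ) :
    ∃ lam : ℝ, lam ∈ Set.Ioo (-1 : ℝ) 1 ∧
      ((1 + lam ^ 2) * (∑ i, x₀ i * y₀ i)
        + lam * ((∑ i, x₀ i ^ 2) + ∑ i, y₀ i ^ 2)) / (1 - lam ^ 2) ^ 2 - z₀ + lam = 0 ∧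
      (∀ lam' ∈ Set.Ioo (-1 : ℝ) 1,
        ((1 + lam' ^ 2) * (∑ i, x₀ i * y₀ i)
          + lam' * ((∑ i, x₀ i ^ 2) + ∑ i, y₀ i ^ 2)) / (1 - lam' ^ 2) ^ 2 - z₀ + lam' = 0 →
        lam' = lam) ∧
      ((fun i => (x₀ i + lam * y₀ i) / (1 - lam ^ 2)),
       (fun i => (y₀ i + lam * x₀ i) / (1 - lam ^ 2)), z₀ - lam) ∈
        {t : (Fin n → ℝ) × (Fin n → ℝ) × ℝ | t.2.2 = ∑ i, t.1 i * t.2.1 i} ∧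
      ∀ t ∈ {t : (Fin n → ℝ) × (Fin n → ℝ) × ℝ | t.2.2 = ∑ i, t.1 i * t.2.1 i},
        t ≠ ((fun i => (x₀ i + lam * y₀ i) / (1 - lam ^ 2)),
             (fun i => (y₀ i + lam * x₀ i) / (1 - lam ^ 2)), z₀ - lam) →
        (∑ i, ((x₀ i + lam * y₀ i) / (1 - lam ^ 2) - x₀ i) ^ 2) +
          (∑ i, ((y₀ i + lam * x₀ i) / (1 - lam ^ 2) - y₀ i) ^ 2) +
          ((z₀ - lam) - z₀) ^ 2
        < (∑ i, (t.1 i - x₀ i) ^ 2) + (∑ i, (t.2.1 i - y₀ i) ^ 2) + (t.2.2 - z₀) ^ 2 := by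
  set p : ℝ := ∑ i, x₀ i * y₀ i with hp
  set q : ℝ := (∑ i, x₀ i ^ 2) + ∑ i, y₀ i ^ 2 with hq
  -- positivity of q + 2p and q - 2p
  have hsum_plus : q + 2 * p = ∑ i, (x₀ i + y₀ i) ^ 2 := by
    rw [hp, hq]
    rw [show ∑ i, (x₀ i + y₀ i) ^ 2 = ∑ i, (x₀ i ^ 2 + y₀ i ^ 2 + 2 * (x₀ i * y₀ i)) from
      Finset.sum_congr rfl (fun i _ => by ring)]
    simp only [Finset.sum_add_distrib, ← Finset.mul_sum]
  have hsum_minus : q - 2 * p = ∑ i, (x₀ i - y₀ i) ^ 2 := by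
    rw [hp, hq]
    rw [show ∑ i, (x₀ i - y₀ i) ^ 2 = ∑ i, (x₀ i ^ 2 + y₀ i ^ 2 - 2 * (x₀ i * y₀ i)) from
      Finset.sum_congr rfl (fun i _ => by ring)]
    simp only [Finset.sum_add_distrib, Finset.sum_sub_distrib, ← Finset.mul_sum]
  have hplus : 0 < q + 2 * p := by
    rw [hsum_plus]
    obtain ⟨i, hi⟩ := Function.ne_iff.mp hne'
    refine Finset.sum_pos' (fun j _ => sq_nonneg _) ⟨i, Finset.mem_univ i, ?_⟩
    have : x₀ i + y₀ i ≠ 0 := by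
      intro h; apply hi; simp [Pi.neg_apply]; linarith
    exact lt_of_le_of_ne (sq_nonneg _) (Ne.symm (pow_ne_zero 2 this))
  have hminus : 0 < q - 2 * p := by
    rw [hsum_minus]
    obtain ⟨i, hi⟩ := Function.ne_iff.mp hne
    refine Finset.sum_pos' (fun j _ => sq_nonneg _) ⟨i, Finset.mem_univ i, ?_⟩
    have : x₀ i - y₀ i ≠ 0 := sub_ne_zero.mpr hi
    exact lt_of_le_of_ne (sq_nonneg _) (Ne.symm (pow_ne_zero 2 this))
  set A : ℝ := (q + 2 * p) / 4 with hA
  set B : ℝ := (q - 2 * p) / 4 with hB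
  have hApos : 0 < A := by rw [hA]; linarith
  have hBpos : 0 < B := by rw [hB]; linarith
  -- equivalence of the two forms of f
  have hFeq : ∀ l ∈ Set.Ioo (-1:ℝ) 1,
      ((1 + l ^ 2) * p + l * q) / (1 - l ^ 2) ^ 2 - z₀ + l
        = A / (1 - l) ^ 2 - B / (1 + l) ^ 2 + l - z₀ := by
    rintro l ⟨hl1, hl2⟩
    rw [hA, hB]
    exact aux_eq10 p q z₀ l (ne_of_gt (by linarith)) (ne_of_gt (by linarith))
  obtain ⟨lam, hlam, hroot, huniq⟩ := aux_root10 A B z₀ hApos hBpos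
  have hd : (1:ℝ) - lam ^ 2 ≠ 0 := by
    obtain ⟨h1, h2⟩ := hlam; nlinarith
  have hroot' : ((1 + lam ^ 2) * p + lam * q) / (1 - lam ^ 2) ^ 2 - z₀ + lam = 0 := by
    rw [hFeq lam hlam]; exact hroot
  have hstar : z₀ - lam = ∑ i, ((x₀ i + lam * y₀ i) / (1 - lam ^ 2)) * ((y₀ i + lam * x₀ i) / (1 - lam ^ 2)) := by
    rw [aux_sum10 n x₀ y₀ lam hd, ← hp, ← hq]
    linarith [hroot']
  refine ⟨lam, hlam, hroot', ?_, ?_, ?_⟩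
  · intro l hl hFl
    exact huniq l hl (by rw [← hFeq l hl]; exact hFl)
  · exact hstar
  · rintro ⟨x, y, z⟩ ht htne
    exact aux_min10 n x₀ y₀ z₀ lam hlam.1 hlam.2 hstar x y z ht htne
end

section
/- Let n ≥ 1, let I ⊆ {1, …, n} be nonempty, and let D_I = {(x, y) ∈ ℝⁿ × ℝ : xᵢ = y for all i ∈ I, and x_j ≤ y for all j ∉ I}. Given x₀ ∈ ℝⁿ and y₀ ∈ ℝ, set y* = (y₀ + Σ_{i∈I} x₀ᵢ)/(|I| + 1) and define x* ∈ ℝⁿ by x*ᵢ = y* for i ∈ I and x*_j = x₀_j for j ∉ I. If x₀_j ≤ y* for all j ∉ I, then (x*, y*) is the unique point of D_I minimizing the squared Euclidean distance ‖x − x₀‖² + (y − y₀)² over D_I. -/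
/-- Projection onto the piece `D_I = {(x, y) : xᵢ = y for i ∈ I, x_j ≤ y for j ∉ I}`:
if `y* = (y₀ + Σ_{i∈I} x₀ᵢ)/(|I| + 1)` satisfies `x₀_j ≤ y*` for all `j ∉ I`, then
`(x*, y*)` (with `x*ᵢ = y*` for `i ∈ I`, `x*_j = x₀_j` otherwise) is the unique point
of `D_I` minimizing the squared Euclidean distance to `(x₀, y₀)`. -/
theorem stmt_11 (n : ℕ) (hn : 1 ≤ n) (I : Finset (Fin n)) (hI : I.Nonempty)
    (x₀ : Fin n → ℝ) (y₀ : ℝ)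
    (ystar : ℝ) (hystar : ystar = (y₀ + ∑ i ∈ I, x₀ i) / (I.card + 1))
    (hvalid : ∀ j ∉ I, x₀ j ≤ ystar) :
    ((fun i => if i ∈ I then ystar else x₀ i), ystar) ∈
        {p : (Fin n → ℝ) × ℝ | (∀ i ∈ I, p.1 i = p.2) ∧ ∀ j ∉ I, p.1 j ≤ p.2} ∧
    ∀ q ∈ {p : (Fin n → ℝ) × ℝ | (∀ i ∈ I, p.1 i = p.2) ∧ ∀ j ∉ I, p.1 j ≤ p.2},
      q ≠ ((fun i => if i ∈ I then ystar else x₀ i), ystar) →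
      (∑ i, ((if i ∈ I then ystar else x₀ i) - x₀ i) ^ 2) + (ystar - y₀) ^ 2
        < (∑ i, (q.1 i - x₀ i) ^ 2) + (q.2 - y₀) ^ 2 := by
  set S := ∑ i ∈ I, x₀ i with hS
  set c := (I.card : ℝ) with hc
  have hcpos : 0 < c + 1 := by positivity
  have hcy : ystar * (c + 1) = y₀ + S := by
    rw [hystar]; field_simp
  constructor
  · constructor
    · intro i hi; simp [hi]
    · intro j hj; simp only [if_neg hj]; exact hvalid j hj
  · rintro ⟨x, y⟩ ⟨hq1, hq2⟩ hne
    simp only at hq1 hq2 ⊢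
    have hsplit : ∀ f : Fin n → ℝ, ∑ i, f i = ∑ i ∈ I, f i + ∑ i ∈ Iᶜ, f i :=
      fun f => (Finset.sum_add_sum_compl I f).symm
    rw [hsplit, hsplit]
    have hL1 : ∑ i ∈ I, ((if i ∈ I then ystar else x₀ i) - x₀ i) ^ 2
        = ∑ i ∈ I, (ystar - x₀ i) ^ 2 :=
      Finset.sum_congr rfl fun i hi => by rw [if_pos hi]
    have hL2 : ∑ i ∈ Iᶜ, ((if i ∈ I then ystar else x₀ i) - x₀ i) ^ 2 = 0 :=
      Finset.sum_eq_zero fun i hi => by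
        rw [if_neg (Finset.mem_compl.mp hi)]; ring
    have hR1 : ∑ i ∈ I, (x i - x₀ i) ^ 2 = ∑ i ∈ I, (y - x₀ i) ^ 2 :=
      Finset.sum_congr rfl fun i hi => by rw [hq1 i hi]
    rw [hL1, hL2, hR1]
    have e1 : ∑ i ∈ I, (y - x₀ i) ^ 2
        = ∑ i ∈ I, (ystar - x₀ i) ^ 2 + ((y - ystar) * (c * (y + ystar)) - 2 * (y - ystar) * S) := by
      have h : ∑ i ∈ I, (y - x₀ i) ^ 2
          = ∑ i ∈ I, ((ystar - x₀ i) ^ 2 + ((y - ystar) * (y + ystar) - 2 * (y - ystar) * x₀ i)) :=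
        Finset.sum_congr rfl fun i _ => by ring
      rw [h, Finset.sum_add_distrib, Finset.sum_sub_distrib, Finset.sum_const,
        ← Finset.mul_sum, ← hS, nsmul_eq_mul, ← hc]
      ring
    have hkey : ∑ i ∈ I, (y - x₀ i) ^ 2 + (y - y₀) ^ 2
        = ∑ i ∈ I, (ystar - x₀ i) ^ 2 + (ystar - y₀) ^ 2 + (c + 1) * (y - ystar) ^ 2 := by
      linear_combination e1 + 2 * (y - ystar) * hcy
    have hcnonneg : 0 ≤ ∑ j ∈ Iᶜ, (x j - x₀ j) ^ 2 :=
      Finset.sum_nonneg fun j _ => sq_nonneg _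
    have hpos : 0 < (c + 1) * (y - ystar) ^ 2 + ∑ j ∈ Iᶜ, (x j - x₀ j) ^ 2 := by
      rcases eq_or_ne y ystar with hy | hy
      · -- then x differs from x* at some j ∉ I
        have hxne : x ≠ fun i => if i ∈ I then ystar else x₀ i := by
          intro hx
          exact hne (by rw [Prod.ext_iff]; exact ⟨hx, hy⟩)
        obtain ⟨j, hj⟩ := Function.ne_iff.mp hxne
        have hjI : j ∉ I := by
          intro hjmem
          apply hj
          rw [if_pos hjmem, hq1 j hjmem, hy]
        rw [if_neg hjI] at hj
        have h1 : (x j - x₀ j) ^ 2 ≤ ∑ j ∈ Iᶜ, (x j - x₀ j) ^ 2 :=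
          Finset.single_le_sum (fun k _ => sq_nonneg (x k - x₀ k)) (Finset.mem_compl.mpr hjI)
        have h2 : 0 < (x j - x₀ j) ^ 2 := by
          have := sub_ne_zero.mpr hj; positivity
        nlinarith [sq_nonneg (y - ystar)]
      · have hy' := sub_ne_zero.mpr hy
        have : 0 < (c + 1) * (y - ystar) ^ 2 := by positivity
        nlinarith
    linarith [hkey]
end

section
/- Let C̄ ⊆ ℝ^{d_x} × ℝ^{d_y} be a nonempty set that is the graph of a function, i.e., whenever (w, u) ∈ C̄ and (w, u') ∈ C̄ one has u = u'. Let n ≥ 1 and define the consensus set C = {(w, u₁, …, u_n) ∈ ℝ^{d_x} × (ℝ^{d_y})ⁿ : (w, uᵢ) ∈ C̄ for all i}. Fix z₀ = (x₀, y₀,₁, …, y₀,ₙ) and let ȳ₀ = (1/n) Σᵢ y₀,ᵢ. Then a point (x, ȳ) ∈ C̄ minimizes the weighted objective ‖w − x₀‖² + n‖ū − ȳ₀‖² over (w, ū) ∈ C̄ if and only if the point (x, ȳ, …, ȳ) (with ȳ repeated n times) minimizes the squared Euclidean distance ‖w − x₀‖² + Σᵢ ‖uᵢ − y₀,ᵢ‖²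 over C. Moreover, every point of C has the form (w, ū, …, ū) with (w, ū) ∈ C̄. -/
open Finset in
lemma stmt_14_key {dy n : ℕ} (hn : 1 ≤ n)
    (y₀ : Fin n → EuclideanSpace ℝ (Fin dy))
    (ybar₀ : EuclideanSpace ℝ (Fin dy)) (hybar₀ : ybar₀ = (n : ℝ)⁻¹ • ∑ i, y₀ i)
    (u : EuclideanSpace ℝ (Fin dy)) :
    ∑ i, ‖u - y₀ i‖ ^ 2 = n * ‖u - ybar₀‖ ^ 2 + ∑ i, ‖y₀ i - ybar₀‖ ^ 2 := by
  have hn' : (n : ℝ) ≠ 0 := by positivity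
  have hsum : ∑ i, (y₀ i - ybar₀) = 0 := by
    rw [Finset.sum_sub_distrib, Finset.sum_const, hybar₀, card_univ, Fintype.card_fin,
      ← Nat.cast_smul_eq_nsmul ℝ, smul_smul, mul_inv_cancel₀ hn', one_smul, sub_self]
  have expand : ∀ i, ‖u - y₀ i‖ ^ 2 =
      ‖u - ybar₀‖ ^ 2 - 2 * inner ℝ (u - ybar₀) (y₀ i - ybar₀) + ‖y₀ i - ybar₀‖ ^ 2 := by
    intro i
    have : u - y₀ i = (u - ybar₀) - (y₀ i - ybar₀) := by abel
    rw [this, @norm_sub_sq_real]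
  simp only [expand]
  rw [Finset.sum_add_distrib, Finset.sum_sub_distrib, Finset.sum_const, card_univ,
    Fintype.card_fin, ← Finset.mul_sum, ← inner_sum, hsum, inner_zero_right]
  ring

/-- Projection onto a consensus set: for `C̄` the graph of a function and
`C = {(w, u₁, …, u_n) : (w, uᵢ) ∈ C̄ ∀i}`, every point of `C` has the form
`(w, ū, …, ū)` with `(w, ū) ∈ C̄`, and `(x, ȳ) ∈ C̄` minimizes the weighted objective
`‖w − x₀‖² + n‖ū − ȳ₀‖²` over `C̄` iff `(x, ȳ, …, ȳ)` minimizes the squared Euclidean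
distance `‖w − x₀‖² + Σᵢ ‖uᵢ − y₀ᵢ‖²` over `C`, where `ȳ₀ = (1/n) Σᵢ y₀ᵢ`. -/
theorem stmt_14 (dx dy n : ℕ) (hn : 1 ≤ n)
    (Cbar : Set (EuclideanSpace ℝ (Fin dx) × EuclideanSpace ℝ (Fin dy)))
    (hCne : Cbar.Nonempty)
    (hgraph : ∀ w u u', (w, u) ∈ Cbar → (w, u') ∈ Cbar → u = u')
    (x₀ : EuclideanSpace ℝ (Fin dx)) (y₀ : Fin n → EuclideanSpace ℝ (Fin dy))
    (ybar₀ : EuclideanSpace ℝ (Fin dy)) (hybar₀ : ybar₀ = (n : ℝ)⁻¹ • ∑ i, y₀ i) :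
    (∀ p ∈ {q : EuclideanSpace ℝ (Fin dx) × (Fin n → EuclideanSpace ℝ (Fin dy)) |
        ∀ i, (q.1, q.2 i) ∈ Cbar},
      ∃ w u, (w, u) ∈ Cbar ∧ p = (w, fun _ => u)) ∧
    (∀ x ybar, (x, ybar) ∈ Cbar →
      ((∀ q ∈ Cbar,
          ‖x - x₀‖ ^ 2 + n * ‖ybar - ybar₀‖ ^ 2 ≤ ‖q.1 - x₀‖ ^ 2 + n * ‖q.2 - ybar₀‖ ^ 2) ↔
       (∀ p ∈ {q : EuclideanSpace ℝ (Fin dx) × (Fin n → EuclideanSpace ℝ (Fin dy)) |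
            ∀ i, (q.1, q.2 i) ∈ Cbar},
          ‖x - x₀‖ ^ 2 + ∑ i, ‖ybar - y₀ i‖ ^ 2 ≤
            ‖p.1 - x₀‖ ^ 2 + ∑ i, ‖p.2 i - y₀ i‖ ^ 2))) := by
  have i0 : Fin n := ⟨0, hn⟩
  have consensus : ∀ p ∈ {q : EuclideanSpace ℝ (Fin dx) × (Fin n → EuclideanSpace ℝ (Fin dy)) |
        ∀ i, (q.1, q.2 i) ∈ Cbar},
      ∃ w u, (w, u) ∈ Cbar ∧ p = (w, fun _ => u) := by
    intro p hp
    refine ⟨p.1, p.2 i0, hp i0, ?_⟩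
    ext1
    · rfl
    · funext i
      exact hgraph p.1 (p.2 i) (p.2 i0) (hp i) (hp i0)
  refine ⟨consensus, ?_⟩
  intro x ybar hxy
  have keyu := stmt_14_key hn y₀ ybar₀ hybar₀
  constructor
  · intro hmin p hp
    obtain ⟨w, u, hwu, rfl⟩ := consensus p hp
    have := hmin (w, u) hwu
    simp only [keyu ybar, keyu u]
    linarith
  · intro hmin q hq
    have hp : (q.1, fun _ : Fin n => q.2) ∈ {r : EuclideanSpace ℝ (Fin dx) ×
        (Fin n → EuclideanSpace ℝ (Fin dy)) | ∀ i, (r.1, r.2 i) ∈ Cbar} := fun i => hq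
    have := hmin _ hp
    simp only [keyu ybar, keyu q.2] at this
    linarith
end
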